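/- Let R_1 and R_2 be R-cross-sections of IS_n and let φ: R_1 → R_2 be a semigroup isomorphism. Then there exists a permutation Θ of N_n such that for every block idempotent e of R_1 the partial maps eΘ and Θφ(e) coincide; that is, for every x ∈ N_n, x belongs to dom(e) if and only if xΘ belongs to dom(φ(e)), and in that case (xe)Θ = (xΘ)φ(e). -/

import Mathlib

open scoped Classical

/-- `IS n` is the full inverse symmetric semigroup: all partial bijections of `Fin n`;
multiplication is composition of partial maps (maps acting on the right). -/
abbrev IS (n : ℕ) : Type := PEquiv (Fin n) (Fin n)

noncomputable section
namespace ISW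

instance {n : ℕ} : Mul (IS n) := ⟨PEquiv.trans⟩
instance {n : ℕ} : One (IS n) := ⟨PEquiv.refl _⟩

/-- The domain of a partial bijection. -/
def pdom {n : ℕ} (f : IS n) : Set (Fin n) := {x | (f x).isSome}

/-- The range of a partial bijection. -/
def pran {n : ℕ} (f : IS n) : Set (Fin n) := {y | (f.symm y).isSome}

/-- Green's R-relation on a semigroup (with identity): `u R v` iff `uS = vS`. -/
def GreenR {S : Type*} [Mul S] (u v : S) : Prop :=
  {w | ∃ s, w = u * s} = {w | ∃ s, w = v * s}

/-- Green's L-relation on a semigroup (with identity): `u L v` iff `Su = Sv`. -/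
def GreenL {S : Type*} [Mul S] (u v : S) : Prop :=
  {w | ∃ s, w = s * u} = {w | ∃ s, w = s * v}

/-- An R-cross-section: a subsemigroup containing exactly one element of every
Green R-class. -/
def IsRCrossSection {S : Type*} [Mul S] (T : Set S) : Prop :=
  (∀ a ∈ T, ∀ b ∈ T, a * b ∈ T) ∧ ∀ x : S, ∃! t, t ∈ T ∧ GreenR x t

/-- An L-cross-section: a subsemigroup containing exactly one element of every
Green L-class. -/
def IsLCrossSection {S : Type*} [Mul S] (T : Set S) : Prop :=
  (∀ a ∈ T, ∀ b ∈ T, a * b ∈ T) ∧ ∀ x : S, ∃! t, t ∈ T ∧ GreenL x t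

/-- `φ` realizes a semigroup isomorphism from `T₁` onto `T₂`. -/
def IsSemiIso {S₁ S₂ : Type*} [Mul S₁] [Mul S₂] (T₁ : Set S₁) (T₂ : Set S₂)
    (φ : S₁ → S₂) : Prop :=
  Set.BijOn φ T₁ T₂ ∧ ∀ a ∈ T₁, ∀ b ∈ T₁, φ (a * b) = φ a * φ b

/-- The partial wreath product `IS m ≀_p IS n`: pairs `(f, a)` with `a ∈ IS n` and
`f` a partial map from `Fin n` to `IS m` whose domain equals the domain of `a`. -/
structure PW (m n : ℕ) where
  base : IS n
  fib : Fin n → Option (IS m)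
  dom_eq : ∀ x, (fib x).isSome ↔ (base x).isSome

/-- Multiplication of the partial wreath product: `(f,a)·(g,b) = (f g^a, ab)`. -/
instance {m n : ℕ} : Mul (PW m n) where
  mul u v :=
    { base := u.base * v.base
      fib := fun x => Option.map₂ (· * ·) (u.fib x) ((u.base x).bind v.fib)
      dom_eq := by
        intro x
        show _ ↔ (((u.base x).bind v.base)).isSome
        cases h : u.base x with
        | none =>
          have : u.fib x = none := by
            have := (u.dom_eq x)
            simp [h] at this
            simpa using Option.not_isSome_iff_eq_none.mp (by simp [this])
          simp [h, this, Option.map₂]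
        | some y =>
          have hf : (u.fib x).isSome := (u.dom_eq x).mpr (by simp [h])
          obtain ⟨s, hs⟩ := Option.isSome_iff_exists.mp hf
          cases h2 : v.base y with
          | none =>
            have : v.fib y = none := by
              have := (v.dom_eq y)
              simp [h2] at this
              simpa using Option.not_isSome_iff_eq_none.mp (by simp [this])
            simp [h, h2, hs, this, Option.map₂]
          | some z =>
            have hg : (v.fib y).isSome := (v.dom_eq y).mpr (by simp [h2])
            obtain ⟨t, ht⟩ := Option.isSome_iff_exists.mp hg
            simp [h, h2, hs, ht, Option.map₂] }

/-- The identity of the partial wreath product. -/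
instance {m n : ℕ} : One (PW m n) where
  one :=
    { base := 1
      fib := fun _ => some 1
      dom_eq := by intro x; simp; rfl }

/-- `chainFun L j x`: with `L` listing the elements of a block in increasing order and
`0 ≤ j < |L|` (`j` is the 0-based version of the paper's index), this is the value at `x` of
the chain `a_{i,j}`: the partial bijection with domain everything except `L[j]`,
sending `L[l] ↦ L[l+1]` for `l < j` and fixing all other points. -/
def chainFun {n : ℕ} (L : List (Fin n)) (j : ℕ) (x : Fin n) : Option (Fin n) :=
  if x ∈ L then
    if L.idxOf x = j then none
    else if L.idxOf x < j then L[L.idxOf x + 1]?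
    else some x
  else some x

/-- The generators `a_{i,j}` attached to an ordered decomposition with blocks `B i`. -/
def RGens {n s : ℕ} (B : Fin s → List (Fin n)) : Set (IS n) :=
  {a : IS n | ∃ i : Fin s, ∃ j : ℕ, j < (B i).length ∧ ∀ x, a x = chainFun (B i) j x}

/-- `R(M⃗₁, …, M⃗ₛ)`: the subsemigroup of `IS n` generated by the chains `a_{i,j}`
together with the identity map. -/
def RSec {n s : ℕ} (B : Fin s → List (Fin n)) : Set (IS n) :=
  (Subsemigroup.closure (RGens B ∪ {1}) : Subsemigroup (IS n))

/-- A decomposition of `Fin n` into disjoint nonempty blocks, each block equipped with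
a linear order, recorded by listing the elements of each block in increasing order. -/
structure OrderedPartition (n s : ℕ) where
  B : Fin s → List (Fin n)
  nonempty : ∀ i, B i ≠ []
  nodup : ∀ i, (B i).Nodup
  disjoint : ∀ i j, i ≠ j → ∀ x, x ∈ B i → x ∉ B j
  cover : ∀ x, ∃ i, x ∈ B i

/-- The chain `a_{i,j}` of the block listed by `L`, viewed inside `IS(M_i)`, i.e. embedded
into `IS n` as a partial bijection whose domain is contained in the block: it is defined on
`L` minus `L[j]`, sends `L[l] ↦ L[l+1]` for `l < j` and fixes the other points of `L`. -/
def chainFunB {n : ℕ} (L : List (Fin n)) (j : ℕ) (x : Fin n) : Option (Fin n) :=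
  if x ∈ L then
    if L.idxOf x = j then none
    else if L.idxOf x < j then L[L.idxOf x + 1]?
    else some x
  else none

/-- The generators of `R(M⃗)` inside `IS(M)` (embedded in `IS n`), `M` listed by `L`. -/
def BlockGens {n : ℕ} (L : List (Fin n)) : Set (IS n) :=
  {a : IS n | ∃ j : ℕ, j < L.length ∧ ∀ x, a x = chainFunB L j x}

/-- The identity of `IS(M)` (embedded in `IS n`): the identity map of the block listed by `L`. -/
def idOn {n : ℕ} (L : List (Fin n)) : Set (IS n) :=
  {a : IS n | ∀ x, a x = if x ∈ L then some x else none}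

/-- The R-cross-section `R(M⃗)` of `IS(M)`, embedded into `IS n`, for the block listed by `L`. -/
def RSecBlock {n : ℕ} (L : List (Fin n)) : Set (IS n) :=
  (Subsemigroup.closure (BlockGens L ∪ idOn L) : Subsemigroup (IS n))

/-- The wreath product `R_i ≀_p R(M⃗_i)` where `R(M⃗_i) ⊆ IS(M_i)`, `M_i` listed by `L`,
and `R_i = T ⊆ IS m`, realized inside `PW m n` via the natural embedding
`IS m ≀_p IS(M_i) ⊆ IS m ≀_p IS n`. -/
def WBlock (m n : ℕ) (L : List (Fin n)) (T : Set (IS m)) : Set (PW m n) :=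
  {u : PW m n | u.base ∈ RSecBlock L ∧ ∀ x f, u.fib x = some f → f ∈ T}

/-- The element `e' = (0̄, 1)` of `IS m ≀_p IS n`: the second component is the identity of
`IS n` and the first component sends every point to the empty map `0` of `IS m`. -/
def ezero (m n : ℕ) : PW m n where
  base := 1
  fib := fun _ => some ⊥
  dom_eq := by intro x; simp; rfl

/-!
Every element of `R(M⃗₁, …, M⃗ₛ)` maps each block into itself without lowering positions, and is
defined on the whole tail of a block beyond any point it keeps in place. So the idempotents of
`R₁` are identities on unions of block suffixes, and, `R₁` being an R-cross-section, the identity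
on every single suffix lies in `R₁`. The map `S ↦ dom φ(id_S)` on domains of idempotents of `R₁`
is injective and preserves intersections. The suffixes of `M_i` starting at the position of `x`
and just after it differ by `x` alone, so their images differ, and choosing `Θ x` in the
difference yields an injective, hence bijective, `Θ` with `x ∈ S ↔ Θ x ∈ dom φ(id_S)`.
-/

/-- Since `ψ` is injective, `ψ (U x) ⊄ ψ (U x \ {x})` for the least member `U x` of `𝓕`
containing `x`; any point `θ x` of the difference works. -/
theorem exists_injective_forall_mem_iff {α β : Type*} {𝓕 : Set (Set α)} {ψ : Set α → Set β}
    (h𝓕 : ∀ S ∈ 𝓕, ∀ T ∈ 𝓕, S ∩ T ∈ 𝓕) (hψ : ∀ S ∈ 𝓕, ∀ T ∈ 𝓕, ψ (S ∩ T) = ψ S ∩ ψ T)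
    (hψ_inj : Set.InjOn ψ 𝓕) (hU : ∀ x, ∃ U, IsLeast {S | S ∈ 𝓕 ∧ x ∈ S} U ∧ U \ {x} ∈ 𝓕) :
    ∃ θ : α → β, Function.Injective θ ∧ ∀ S ∈ 𝓕, ∀ x, x ∈ S ↔ θ x ∈ ψ S := by
  choose U hU hU_diff using hU
  have hU_mem (x : α) : U x ∈ 𝓕 := (hU x).1.1
  have hU_self (x : α) : x ∈ U x := (hU x).1.2
  have hψ_mono : ∀ S ∈ 𝓕, ∀ T ∈ 𝓕, S ⊆ T → ψ S ⊆ ψ T := by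
    intro S hS T hT hST
    rw [← Set.inter_eq_left.mpr hST, hψ S hS T hT]
    exact Set.inter_subset_right
  have hstrict (x : α) : ∃ y ∈ ψ (U x), y ∉ ψ (U x \ {x}) := by
    by_contra! h
    have := hψ_inj (hU_mem x) (hU_diff x)
      (Set.Subset.antisymm h (hψ_mono _ (hU_diff x) _ (hU_mem x) Set.sdiff_subset))
    exact (this ▸ hU_self x : x ∈ U x \ {x}).2 rfl
  choose θ hθ hθ_diff using hstrict
  have hmem : ∀ S ∈ 𝓕, ∀ x, x ∈ S ↔ θ x ∈ ψ S := by
    refine fun S hS x => ⟨fun hx => hψ_mono _ (hU_mem x) _ hS ((hU x).2 ⟨hS, hx⟩) (hθ x),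
      fun h => by_contra fun hx => hθ_diff x ?_⟩
    have hinter : θ x ∈ ψ (S ∩ U x) := by
      rw [hψ S hS _ (hU_mem x)]
      exact ⟨h, hθ x⟩
    exact hψ_mono _ (h𝓕 S hS _ (hU_mem x)) _ (hU_diff x)
      (fun y hy => ⟨hy.2, fun hyx => hx (hyx ▸ hy.1)⟩) hinter
  refine ⟨θ, fun x y hxy => by_contra fun hne => ?_, hmem⟩
  have hy : y ∈ U x := (hmem _ (hU_mem x) y).2 (hxy ▸ (hmem _ (hU_mem x) x).1 (hU_self x))
  have hx : x ∈ U y := (hmem _ (hU_mem y) x).2 (hxy ▸ (hmem _ (hU_mem y) y).1 (hU_self y))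
  exact ((hU y).2 ⟨hU_diff x, hy, Ne.symm hne⟩ hx).2 rfl

theorem apply_eq_some_self_of_le {α : Type*} {t : α ≃. α} {S : Set α} (hS : S.Finite)
    {r : α → ℕ} (hr : S.InjOn r) (ht : ∀ x ∈ S, ∃ y ∈ S, t x = some y ∧ r x ≤ r y) :
    ∀ x ∈ S, t x = some x := by
  by_contra! h
  -- a moved point of maximal rank would share its image with a fixed point
  obtain ⟨x, ⟨hxS, hx⟩, hmax⟩ := Set.exists_max_image {x | x ∈ S ∧ t x ≠ some x} r
    (hS.subset fun _ hx => hx.1) (let ⟨x, hxS, hx⟩ := h; ⟨x, hxS, hx⟩)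
  obtain ⟨y, hyS, hxy, hle⟩ := ht x hxS
  have hne : y ≠ x := fun h => hx (h ▸ hxy)
  have hlt : r x < r y := hle.lt_of_ne fun h => hne (hr hyS hxS h.symm)
  have hy : t y = some y := by
    by_contra hy
    exact absurd (hmax y ⟨hyS, hy⟩) (not_le.mpr hlt)
  exact hne (t.inj (hxy ▸ rfl : y ∈ t x) (hy ▸ rfl : y ∈ t y)).symm

section PartialIdentity

variable {n : ℕ}

theorem mul_apply (a b : IS n) (x : Fin n) : (a * b) x = (a x).bind b := rfl

def partialId (S : Set (Fin n)) : IS n := PEquiv.ofSet S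

theorem partialId_apply (S : Set (Fin n)) (x : Fin n) :
    partialId S x = if x ∈ S then some x else none := rfl

theorem mem_pdom {a : IS n} {x : Fin n} : x ∈ pdom a ↔ (a x).isSome := Iff.rfl

theorem pdom_partialId (S : Set (Fin n)) : pdom (partialId S) = S := by
  ext x
  by_cases hx : x ∈ S <;> simp [mem_pdom, partialId_apply, hx]

theorem partialId_mul_partialId (S T : Set (Fin n)) :
    partialId S * partialId T = partialId (S ∩ T) := by
  ext x y
  by_cases hS : x ∈ S <;> by_cases hT : x ∈ T <;> simp [mul_apply, partialId_apply, hS, hT]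

theorem pdom_mul_subset (a b : IS n) : pdom (a * b) ⊆ pdom a := by
  intro x hx
  rw [mem_pdom, mul_apply] at hx
  cases h : a x <;> simp_all [mem_pdom]

theorem pdom_eq_of_greenR {a b : IS n} (h : GreenR a b) : pdom a = pdom b := by
  have ha : a ∈ {w | ∃ s, w = b * s} := h ▸ ⟨1, (PEquiv.trans_refl a).symm⟩
  have hb : b ∈ {w | ∃ s, w = a * s} := h ▸ ⟨1, (PEquiv.trans_refl b).symm⟩
  obtain ⟨s, hs⟩ := ha
  obtain ⟨t, ht⟩ := hb
  exact ((congrArg pdom hs).trans_subset (pdom_mul_subset _ _)).antisymm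
    ((congrArg pdom ht).trans_subset (pdom_mul_subset _ _))

theorem eq_partialId_pdom {a : IS n} (h : ∀ x ∈ pdom a, a x = some x) :
    a = partialId (pdom a) := by
  ext x y
  by_cases hx : x ∈ pdom a
  · simp [h x hx, partialId_apply, hx]
  · simp only [mem_pdom, Option.not_isSome_iff_eq_none] at hx
    simp [hx, partialId_apply, mem_pdom]

theorem apply_eq_some_self_of_mul_self {e : IS n} (he : e * e = e) {x : Fin n}
    (hx : x ∈ pdom e) : e x = some x := by
  obtain ⟨y, hy⟩ := Option.isSome_iff_exists.mp hx
  have hyy : e y = some y := by simpa [mul_apply, hy] using congrArg (· x) he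
  rw [hy, e.inj hy hyy]

theorem eq_partialId_pdom_of_mul_self {e : IS n} (he : e * e = e) : e = partialId (pdom e) :=
  eq_partialId_pdom fun _ => apply_eq_some_self_of_mul_self he

theorem pdom_mul_of_mul_self {a b : IS n} (ha : a * a = a) (hb : b * b = b) :
    pdom (a * b) = pdom a ∩ pdom b := by
  rw [eq_partialId_pdom_of_mul_self ha, eq_partialId_pdom_of_mul_self hb,
    partialId_mul_partialId]
  simp only [pdom_partialId]

theorem eq_of_pdom_eq_of_mul_self {a b : IS n} (ha : a * a = a) (hb : b * b = b)
    (h : pdom a = pdom b) : a = b := by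
  rw [eq_partialId_pdom_of_mul_self ha, eq_partialId_pdom_of_mul_self hb, h]

end PartialIdentity

section Homomorphism

variable {n : ℕ} {R : Set (IS n)} {φ : IS n → IS n}

theorem map_partialId_mul_self (hφ : ∀ a ∈ R, ∀ b ∈ R, φ (a * b) = φ a * φ b)
    {S : Set (Fin n)} (hS : partialId S ∈ R) :
    φ (partialId S) * φ (partialId S) = φ (partialId S) := by
  rw [← hφ _ hS _ hS, partialId_mul_partialId]
  simp only [Set.inter_self]

theorem pdom_map_partialId_inter (hφ : ∀ a ∈ R, ∀ b ∈ R, φ (a * b) = φ a * φ b)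
    {S T : Set (Fin n)} (hS : partialId S ∈ R) (hT : partialId T ∈ R) :
    pdom (φ (partialId (S ∩ T))) = pdom (φ (partialId S)) ∩ pdom (φ (partialId T)) := by
  rw [← partialId_mul_partialId, hφ _ hS _ hT,
    pdom_mul_of_mul_self (map_partialId_mul_self hφ hS) (map_partialId_mul_self hφ hT)]

theorem injOn_pdom_map_partialId (hφ : ∀ a ∈ R, ∀ b ∈ R, φ (a * b) = φ a * φ b)
    (hinj : Set.InjOn φ R) :
    Set.InjOn (fun S => pdom (φ (partialId S))) {S | partialId S ∈ R} := by
  intro S hS T hT h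
  have := hinj hS hT
    (eq_of_pdom_eq_of_mul_self (map_partialId_mul_self hφ hS) (map_partialId_mul_self hφ hT) h)
  rw [← pdom_partialId S, this, pdom_partialId]

end Homomorphism

section Blocks

variable {n s : ℕ} (P : OrderedPartition n s)

def BlockMonotone (a : IS n) : Prop :=
  ∀ i, ∀ x ∈ P.B i, ∀ y, a x = some y →
    y ∈ P.B i ∧ (P.B i).idxOf x ≤ (P.B i).idxOf y ∧
      ((P.B i).idxOf y = (P.B i).idxOf x →
        ∀ x' ∈ P.B i, (P.B i).idxOf x ≤ (P.B i).idxOf x' → (a x').isSome)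

theorem blockMonotone_one : BlockMonotone P 1 := by
  intro i x hx y hy
  obtain rfl : x = y := Option.some_inj.mp hy
  exact ⟨hx, le_rfl, fun _ _ _ _ => rfl⟩

theorem BlockMonotone.mul {a b : IS n} (ha : BlockMonotone P a) (hb : BlockMonotone P b) :
    BlockMonotone P (a * b) := by
  intro i x hx y hy
  obtain ⟨z, hxz, hzy⟩ := Option.bind_eq_some_iff.mp hy
  obtain ⟨hz, hxz_le, ha_tail⟩ := ha i x hx z hxz
  obtain ⟨hy, hzy_le, hb_tail⟩ := hb i z hz y hzy
  refine ⟨hy, hxz_le.trans hzy_le, fun hyx x' hx' hle => ?_⟩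
  obtain ⟨z', hz'⟩ := Option.isSome_iff_exists.mp (ha_tail (by omega) x' hx' hle)
  obtain ⟨hz'B, hle', -⟩ := ha i x' hx' z' hz'
  rw [mul_apply, hz']
  exact hb_tail (by omega) z' hz'B (by omega)

theorem blockMonotone_of_mem_rGens {a : IS n} (ha : a ∈ RGens P.B) : BlockMonotone P a := by
  obtain ⟨i₀, j, hj, ha⟩ := ha
  intro i x hx y hy
  rw [ha, chainFun] at hy
  by_cases hi : i = i₀
  · subst hi
    have hxL := List.idxOf_lt_length_iff.mpr hx
    rw [if_pos hx] at hy
    split_ifs at hy with h₁ h₂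
    · rw [List.getElem?_eq_getElem (by omega), Option.some_inj] at hy
      subst hy
      rw [(P.nodup i).idxOf_getElem _ (by omega)]
      exact ⟨List.getElem_mem _, by omega, by omega⟩
    · cases hy
      refine ⟨hx, le_rfl, fun _ x' hx' hle => ?_⟩
      rw [ha, chainFun, if_pos hx', if_neg (by omega), if_neg (by omega)]
      rfl
  · have hx₀ := P.disjoint i i₀ hi
    rw [if_neg (hx₀ x hx), Option.some_inj] at hy
    subst hy
    refine ⟨hx, le_rfl, fun _ x' hx' _ => ?_⟩
    rw [ha, chainFun, if_neg (hx₀ x' hx')]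
    rfl

theorem blockMonotone_of_mem_rSec {a : IS n} (ha : a ∈ RSec P.B) : BlockMonotone P a := by
  let M : Subsemigroup (IS n) := ⟨{a | BlockMonotone P a}, fun ha hb => ha.mul P hb⟩
  refine (Subsemigroup.closure_le (S := M)).mpr ?_ ha
  rintro a (ha | rfl)
  · exact blockMonotone_of_mem_rGens P ha
  · exact blockMonotone_one P

def blockSuffix (i : Fin s) (j : ℕ) : Set (Fin n) := {x | x ∈ P.B i ∧ j ≤ (P.B i).idxOf x}

theorem partialId_blockSuffix_mem (h : IsRCrossSection (RSec P.B)) (i : Fin s) (j : ℕ) :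
    partialId (blockSuffix P i j) ∈ RSec P.B := by
  -- the representative of the R-class of the identity on the suffix fixes its domain
  obtain ⟨t, ⟨ht, hGreen⟩, -⟩ := h.2 (partialId (blockSuffix P i j))
  have hdom : pdom t = blockSuffix P i j :=
    (pdom_eq_of_greenR hGreen).symm.trans (pdom_partialId _)
  have hfix : ∀ x ∈ pdom t, t x = some x := by
    rw [hdom]
    refine apply_eq_some_self_of_le (Set.toFinite _)
      (fun x hx y hy h => (List.idxOf_inj hx.1).mp h) fun x hx => ?_
    obtain ⟨y, hy⟩ := Option.isSome_iff_exists.mp (hdom ▸ hx : x ∈ pdom t)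
    obtain ⟨hyB, hle, -⟩ := blockMonotone_of_mem_rSec P ht i x hx.1 y hy
    exact ⟨y, ⟨hyB, hx.2.trans hle⟩, hy, hle⟩
  rwa [eq_partialId_pdom hfix, hdom] at ht

theorem isLeast_blockSuffix (h : IsRCrossSection (RSec P.B)) {i : Fin s} {x : Fin n}
    (hx : x ∈ P.B i) :
    IsLeast {S | partialId S ∈ RSec P.B ∧ x ∈ S} (blockSuffix P i ((P.B i).idxOf x)) := by
  refine ⟨⟨partialId_blockSuffix_mem P h i _, hx, le_rfl⟩, fun S ⟨hS, hxS⟩ x' ⟨hx', hle⟩ => ?_⟩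
  have hSx : partialId S x = some x := by simp [partialId_apply, hxS]
  have := (blockMonotone_of_mem_rSec P hS i x hx x hSx).2.2 rfl x' hx' hle
  rwa [← mem_pdom, pdom_partialId] at this

theorem blockSuffix_idxOf_diff {i : Fin s} {x : Fin n} (hx : x ∈ P.B i) :
    blockSuffix P i ((P.B i).idxOf x) \ {x} = blockSuffix P i ((P.B i).idxOf x + 1) := by
  ext y
  simp only [blockSuffix, Set.mem_sdiff, Set.mem_ofPred_eq, Set.mem_singleton_iff]
  constructor
  · rintro ⟨⟨hy, hle⟩, hne⟩
    exact ⟨hy, hle.lt_of_ne fun h => hne ((List.idxOf_inj hx).mp h).symm⟩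
  · rintro ⟨hy, hlt⟩
    exact ⟨⟨hy, by omega⟩, by rintro rfl; omega⟩

end Blocks

theorem iso_on_block_idempotents_general (n s : ℕ) (P : OrderedPartition n s) (T₂ : Set (IS n))
    (h₁ : IsRCrossSection (RSec P.B))
    (φ : IS n → IS n) (hφ : IsSemiIso (RSec P.B) T₂ φ) :
    ∃ Θ : Equiv.Perm (Fin n),
      ∀ e ∈ RSec P.B, e * e = e → (∃ i : Fin s, ∀ x, (e x).isSome → x ∈ P.B i) →
        ∀ x : Fin n,
          ((e x).isSome ↔ ((φ e) (Θ x)).isSome) ∧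
          (∀ y, e x = some y → (φ e) (Θ x) = some (Θ y)) := by
  obtain ⟨θ, hθ, hmem⟩ := exists_injective_forall_mem_iff
    (𝓕 := {S | partialId S ∈ RSec P.B})
    (fun S hS T hT => show partialId (S ∩ T) ∈ RSec P.B from
      partialId_mul_partialId S T ▸ h₁.1 _ hS _ hT)
    (fun S hS T hT => pdom_map_partialId_inter hφ.2 hS hT)
    (injOn_pdom_map_partialId hφ.2 hφ.1.injOn)
    fun x => by
      obtain ⟨i, hi⟩ := P.cover x
      refine ⟨_, isLeast_blockSuffix P h₁ hi, ?_⟩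
      rw [blockSuffix_idxOf_diff P hi]
      exact partialId_blockSuffix_mem P h₁ i _
  refine ⟨Equiv.ofBijective θ hθ.bijective_of_finite, fun e he hee _ x => ?_⟩
  have hdom : partialId (pdom e) ∈ RSec P.B := eq_partialId_pdom_of_mul_self hee ▸ he
  have hx : x ∈ pdom e ↔ θ x ∈ pdom (φ e) := by
    rw [hmem _ hdom x, ← eq_partialId_pdom_of_mul_self hee]
  have hφe : φ e * φ e = φ e := by rw [← hφ.2 e he e he, hee]
  refine ⟨hx, fun y hy => ?_⟩
  have hxe : x ∈ pdom e := Option.isSome_iff_exists.mpr ⟨y, hy⟩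
  obtain rfl : x = y :=
    Option.some_inj.mp ((apply_eq_some_self_of_mul_self hee hxe).symm.trans hy)
  exact apply_eq_some_self_of_mul_self hφe (hx.mp hxe)

/-- for an isomorphism `φ` between R-cross-sections of `IS n` there is a
permutation `Θ` of `Fin n` such that `e Θ = Θ φ(e)` for every block idempotent `e` of the
first cross-section: `x ∈ dom e ↔ Θ x ∈ dom φ(e)`, and `(x e) Θ = (x Θ) φ(e)` there. -/
theorem iso_on_block_idempotents (n s : ℕ) (P : OrderedPartition n s) (T₂ : Set (IS n))
    (h₁ : IsRCrossSection (RSec P.B)) (h₂ : IsRCrossSection T₂)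
    (φ : IS n → IS n) (hφ : IsSemiIso (RSec P.B) T₂ φ) :
    ∃ Θ : Equiv.Perm (Fin n),
      ∀ e ∈ RSec P.B, e * e = e → (∃ i : Fin s, ∀ x, (e x).isSome → x ∈ P.B i) →
        ∀ x : Fin n,
          ((e x).isSome ↔ ((φ e) (Θ x)).isSome) ∧
          (∀ y, e x = some y → (φ e) (Θ x) = some (Θ y)) :=
  iso_on_block_idempotents_general n s P T₂ h₁ φ hφ

end ISW
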